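/- Let T be a bounded linear operator on L² induced by a K⁰-kernel 𝐓 satisfying condition (iv), let {βₙ} be a complex sequence with βₙ → 0, and set λₙ(λ) = λ(1 − βₙλ)⁻¹. Then for every compact subset K̃ of ∇_s({βₙI + T̃ₙ}) and each fixed t ∈ ℝ, sup_{λ∈K̃} ‖𝐭′_{n|λₙ(λ)}(t) − 𝐭′_{|λ}(t)‖_{L²} → 0 as n → ∞ (the quantity being defined for all sufficiently large n). -/

import Mathlib

open MeasureTheory Filter Topology ContinuousLinearMap
open scoped ENNReal NNReal

noncomputable section

/-- `L²(ℝ)`, the complex Hilbert space of square-integrable functions on `ℝ`. -/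
abbrev L2 : Type := MeasureTheory.Lp ℂ 2 (MeasureTheory.volume : MeasureTheory.Measure ℝ)

/-- Bounded linear operators on `L²`. -/
abbrev L2op : Type := L2 →L[ℂ] L2

/-- `T` is the integral operator induced by the kernel `K`:
`(Tf)(s) = ∫ K(s,t) f(t) dt` for every `f ∈ L²` and almost every `s`. -/
def IsInducedBy (T : L2op) (K : ℝ → ℝ → ℂ) : Prop :=
  ∀ f : L2, ∀ᵐ s : ℝ, (T f : ℝ → ℂ) s = ∫ t : ℝ, K s t * (f : ℝ → ℂ) t

/-- `K` is a `K⁰`-kernel with associated Carleman functions `kt`, `kt'`: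
`kt s = conj (K s ·)` and `kt' s = K · s` as elements of `L²`, the kernel is
continuous and vanishes at infinity, and both Carleman functions are continuous
and vanish at infinity in `L²`-norm. -/
structure IsK0Kernel (K : ℝ → ℝ → ℂ) (kt kt' : ℝ → L2) : Prop where
  repr_t : ∀ s : ℝ, (kt s : ℝ → ℂ) =ᵐ[volume] fun x => (starRingEnd ℂ) (K s x)
  repr_t' : ∀ s : ℝ, (kt' s : ℝ → ℂ) =ᵐ[volume] fun x => K x s
  cont : Continuous fun p : ℝ × ℝ => K p.1 p.2
  vanish : Tendsto (fun p : ℝ × ℝ => K p.1 p.2) (cocompact (ℝ × ℝ)) (𝓝 0)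
  cont_t : Continuous kt
  vanish_t : Tendsto kt (cocompact ℝ) (𝓝 0)
  cont_t' : Continuous kt'
  vanish_t' : Tendsto kt' (cocompact ℝ) (𝓝 0)

/-- The set `Π(T)` of regular values of `T`: those `λ` for which `I - λT` is invertible. -/
def regularSet (T : L2op) : Set ℂ := {lam : ℂ | IsUnit (1 - lam • T)}

/-- The resolvent `R_λ(T) = (I - λT)⁻¹` (junk value `0` if `λ ∉ Π(T)`). -/
def res (T : L2op) (lam : ℂ) : L2op := Ring.inverse (1 - lam • T)

/-- The Fredholm resolvent `T_{|λ} = T R_λ(T)`. -/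
def fres (T : L2op) (lam : ℂ) : L2op := T * res T lam

/-- The region of boundedness `∇_b({Sₙ})`. -/
def nablaB (S : ℕ → L2op) : Set ℂ :=
  {ζ : ℂ | ζ ≠ 0 ∧ ∃ M : ℝ, 0 < M ∧ ∃ N : ℕ, ∀ n > N,
      ζ ∈ regularSet (S n) ∧ ‖fres (S n) ζ‖ ≤ M}

/-- The region of strong convergence `∇_s({Sₙ})`: the `ζ ∈ ∇_b({Sₙ})` such that
the Fredholm resolvents `S_{n|ζ}` converge in the strong operator topology. -/
def nablaS (S : ℕ → L2op) : Set ℂ :=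
  {ζ : ℂ | ζ ∈ nablaB S ∧
    ∀ f : L2, ∃ g : L2, Tendsto (fun n => fres (S n) ζ f) atTop (𝓝 g)}

/-- Nuclear (trace class) operator on `L²`. -/
def IsNuclear (T : L2op) : Prop :=
  ∃ g h : ℕ → L2, Summable (fun k => ‖g k‖ * ‖h k‖) ∧
    ∀ f : L2, T f = ∑' k : ℕ, (inner ℂ f (g k) : ℂ) • h k

/-- The characteristic function `χ` of the interval `(-τ, τ)`, with complex values. -/
def chi (t : ℝ) (x : ℝ) : ℂ := Set.indicator (Set.Ioo (-t) t) 1 x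

/-- Condition (iv) for a `K⁰`-kernel `K` inducing `T`: the positive reals `τ n`
strictly increase to `+∞`, `P n` is the orthogonal projection given by multiplication
by `χₙ = chi (τ n)`, the subkernels `Kₙ(s,t) = χₙ(s)K(s,t)` and
`K̃ₙ(s,t) = χₙ(s)K(s,t)χₙ(t)` are `K⁰`-kernels, and the induced operators
`Tₙ = PₙT` and `T̃ₙ = PₙTPₙ` are nuclear. -/
structure ConditionIV (K : ℝ → ℝ → ℂ) (T : L2op) (tau : ℕ → ℝ) (P : ℕ → L2op) : Prop where
  pos : ∀ n, 0 < tau n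
  mono : StrictMono tau
  tendsto_top : Tendsto tau atTop atTop
  proj : ∀ n, ∀ f : L2, (P n f : ℝ → ℂ) =ᵐ[volume] fun x => chi (tau n) x * (f : ℝ → ℂ) x
  subker : ∀ n, ∃ kt kt' : ℝ → L2, IsK0Kernel (fun s t => chi (tau n) s * K s t) kt kt'
  subker' : ∀ n, ∃ kt kt' : ℝ → L2,
      IsK0Kernel (fun s t => chi (tau n) s * K s t * chi (tau n) t) kt kt'
  nuclear : ∀ n, IsNuclear (P n * T)
  nuclear' : ∀ n, IsNuclear (P n * T * P n)

/-- `λₙ(λ) = λ(1 - βₙλ)⁻¹`. -/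
def lamn (b : ℕ → ℂ) (lam : ℂ) (n : ℕ) : ℂ := lam * (1 - b n * lam)⁻¹

/-- The resolvent kernel for `K` at `λ` built from the resolvent Carleman function
`𝐭'_{|λ}(t) = R_λ(T)(kt' t)`:  `𝐓_{|λ}(s,t) = λ⟨𝐭'_{|λ}(t), 𝐭(s)⟩ + 𝐓(s,t)`
(the paper's inner product `⟨a,b⟩ = ∫ a conj b` is `inner b a` in Mathlib). -/
def resKer (T : L2op) (K : ℝ → ℝ → ℂ) (kt kt' : ℝ → L2) (lam : ℂ) (s t : ℝ) : ℂ :=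
  lam * (inner ℂ (kt s) (res T lam (kt' t)) : ℂ) + K s t

/-- The resolvent kernel for the subkernel `Kₙ` at `λ`:
`𝐓_{n|λ}(s,t) = λ χₙ(s) ⟨𝐭'_{n|λ}(t), 𝐭(s)⟩ + 𝐓ₙ(s,t)`, where
`𝐭'_{n|λ}(t) = R_λ(Tₙ) Pₙ (kt' t)` and `𝐓ₙ(s,t) = χₙ(s) 𝐓(s,t)`. -/
def resKerN (T : L2op) (K : ℝ → ℝ → ℂ) (kt kt' : ℝ → L2) (taun : ℝ) (Pn : L2op)
    (lam : ℂ) (s t : ℝ) : ℂ :=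
  lam * chi taun s * (inner ℂ (kt s) (res (Pn * T) lam (Pn (kt' t))) : ℂ) + chi taun s * K s t

/-- `R` is a resolvent kernel for the `K⁰`-kernel `K` at `λ` (Definition 2 of the paper):
`R` is a `K⁰`-kernel satisfying the two simultaneous integral equations and the
square-integrability condition. -/
def IsResolventKernel (K : ℝ → ℝ → ℂ) (lam : ℂ) (R : ℝ → ℝ → ℂ) : Prop :=
  (∃ rt rt' : ℝ → L2, IsK0Kernel R rt rt') ∧
  (∀ s t : ℝ, R s t - lam * ∫ x : ℝ, K s x * R x t = K s t) ∧
  (∀ s t : ℝ, R s t - lam * ∫ x : ℝ, R s x * K x t = K s t) ∧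
  (∀ f : L2, ∫⁻ s : ℝ, ((‖∫ t : ℝ, R s t * (f : ℝ → ℂ) t‖₊ : ℝ≥0) : ℝ≥0∞) ^ 2 < ⊤)

/-!
With `Sₙ = βₙ + Pₙ T Pₙ`, the scalar identity `1 - λₙ(λ) Pₙ T Pₙ = (1 - βₙ λ)⁻¹ (1 - λ Sₙ)` and
the swap `(1 - y x)⁻¹ y = y (1 - x y)⁻¹` (with `x = λₙ Pₙ T`, `y = Pₙ`, `Pₙ² = Pₙ`) give
`R_{λₙ}(Pₙ T) Pₙ = (1 - βₙ λ) Pₙ R_λ(Sₙ)`. Since `Sₙ → T` strongly and `λ ∈ ∇_s`, the resolvents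
`R_λ(Sₙ)` are bounded and converge strongly, which forces `1 - λ T` to be invertible with
`R_λ(Sₙ) → R_λ(T)` strongly. A Neumann series makes the resolvent bounds uniform near each
`λ`, so the convergence is joint in `(n, λ)`, and compactness of `K̃` makes it uniform.
-/

theorem IsCompact.eventually_forall_of_forall_eventually_prod {X Y : Type*} [TopologicalSpace Y]
    {l : Filter X} {K : Set Y} (hK : IsCompact K) {P : X → Y → Prop}
    (hP : ∀ y ∈ K, ∀ᶠ p in l ×ˢ 𝓝 y, P p.1 p.2) : ∀ᶠ x in l, ∀ y ∈ K, P x y :=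
  (Filter.Eventually.curry (hK.mem_prod_nhdsSet_of_forall hP)).mono fun _ h => h.self_of_nhdsSet

theorem tendsto_biSup_of_forall_eventually_le {ι α : Type*} {l : Filter ι} {s : Set α}
    {f : ι → α → ℝ} (hf : ∀ i, ∀ x ∈ s, 0 ≤ f i x) (h : ∀ ε > 0, ∀ᶠ i in l, ∀ x ∈ s, f i x ≤ ε) :
    Tendsto (fun i => ⨆ x ∈ s, f i x) l (𝓝 0) := by
  refine tendsto_order.2 ⟨fun a ha => Eventually.of_forall fun i =>
    ha.trans_le (Real.iSup_nonneg fun x => Real.iSup_nonneg fun hx => hf i x hx), fun a ha => ?_⟩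
  filter_upwards [h (a / 2) (half_pos ha)] with i hi
  exact (Real.iSup_le (fun x => Real.iSup_le (hi x) (half_pos ha).le) (half_pos ha).le).trans_lt
    (half_lt_self ha)

section Ring

variable {A : Type*} [Ring A]

theorem isUnit_one_sub_mul_comm {x y : A} (h : IsUnit (1 - x * y)) : IsUnit (1 - y * x) := by
  set u := Ring.inverse (1 - x * y)
  refine ⟨⟨1 - y * x, 1 + y * u * x, ?_, ?_⟩, rfl⟩
  · calc (1 - y * x) * (1 + y * u * x) = 1 - y * x + y * ((1 - x * y) * u) * x := by
          noncomm_ring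
      _ = 1 := by rw [Ring.mul_inverse_cancel _ h]; noncomm_ring
  · calc (1 + y * u * x) * (1 - y * x) = 1 - y * x + y * (u * (1 - x * y)) * x := by
          noncomm_ring
      _ = 1 := by rw [Ring.inverse_mul_cancel _ h]; noncomm_ring

theorem inverse_one_sub_mul_comm_mul {x y : A} (h : IsUnit (1 - x * y)) :
    Ring.inverse (1 - y * x) * y = y * Ring.inverse (1 - x * y) := by
  rw [Ring.inverse_mul_eq_iff_eq_mul _ _ _ (isUnit_one_sub_mul_comm h)]
  calc y = y * ((1 - x * y) * Ring.inverse (1 - x * y)) := by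
        rw [Ring.mul_inverse_cancel _ h, mul_one]
    _ = (1 - y * x) * (y * Ring.inverse (1 - x * y)) := by noncomm_ring

theorem IsIdempotentElem.isUnit_one_sub_mul {P S : A} (hP : IsIdempotentElem P)
    (h : IsUnit (1 - P * S * P)) :
    IsUnit (1 - P * S) ∧ Ring.inverse (1 - P * S) * P = P * Ring.inverse (1 - P * S * P) := by
  have hPS : P * (P * S) = P * S := by rw [← mul_assoc, hP.eq]
  have := isUnit_one_sub_mul_comm h
  rw [hPS] at this
  refine ⟨this, ?_⟩
  simpa only [hPS] using inverse_one_sub_mul_comm_mul h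

end Ring

section Algebra

variable {𝕜 A : Type*} [Field 𝕜] [Ring A] [Algebra 𝕜 A]

theorem inverse_one_sub_smul_eq {S : A} {z : 𝕜} (h : IsUnit (1 - z • S)) :
    Ring.inverse (1 - z • S) = 1 + z • (S * Ring.inverse (1 - z • S)) := by
  have h1 := Ring.mul_inverse_cancel _ h
  rw [sub_mul, one_mul, smul_mul_assoc] at h1
  exact sub_eq_iff_eq_add.mp h1

theorem inverse_one_sub_smul_sub_inverse {S : A} {z w : 𝕜}
    (hz : IsUnit (1 - z • S)) (hw : IsUnit (1 - w • S)) :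
    Ring.inverse (1 - z • S) - Ring.inverse (1 - w • S) =
      (z - w) • (Ring.inverse (1 - z • S) * S * Ring.inverse (1 - w • S)) := by
  set a := Ring.inverse (1 - z • S)
  set c := Ring.inverse (1 - w • S)
  calc a - c = a * ((1 - w • S) * c) - (a * (1 - z • S)) * c := by
        rw [Ring.mul_inverse_cancel _ hw, Ring.inverse_mul_cancel _ hz, mul_one, one_mul]
    _ = a * ((z - w) • S) * c := by rw [sub_smul]; noncomm_ring
    _ = (z - w) • (a * S * c) := by rw [mul_smul_comm, smul_mul_assoc]

theorem one_sub_smul_eq_mul {S : A} {z₀ z : 𝕜} (h₀ : IsUnit (1 - z₀ • S)) :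
    1 - z • S = (1 - z₀ • S) * (1 - (z - z₀) • (S * Ring.inverse (1 - z₀ • S))) := by
  have hcomm : (1 - z₀ • S) * S = S * (1 - z₀ • S) := by
    rw [sub_mul, mul_sub, one_mul, mul_one, smul_mul_assoc, mul_smul_comm]
  rw [mul_sub, mul_one, mul_smul_comm, ← mul_assoc, hcomm, mul_assoc,
    Ring.mul_inverse_cancel _ h₀, mul_one, sub_sub, ← add_smul, add_sub_cancel]

theorem isUnit_smul_and_inverse_smul {U : A} {c : 𝕜} (hc : c ≠ 0) (hU : IsUnit U) :
    IsUnit (c • U) ∧ Ring.inverse (c • U) = c⁻¹ • Ring.inverse U := by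
  let u : Aˣ := ⟨c • U, c⁻¹ • Ring.inverse U,
    by rw [smul_mul_smul_comm, mul_inv_cancel₀ hc, Ring.mul_inverse_cancel _ hU, one_smul],
    by rw [smul_mul_smul_comm, inv_mul_cancel₀ hc, Ring.inverse_mul_cancel _ hU, one_smul]⟩
  exact ⟨u.isUnit, Ring.inverse_unit u⟩

theorem isUnit_one_sub_smul_of_shift {S : A} {β z : 𝕜} (hd : 1 - β * z ≠ 0)
    (h : IsUnit (1 - z • (β • 1 + S))) :
    IsUnit (1 - (z * (1 - β * z)⁻¹) • S) ∧
      Ring.inverse (1 - (z * (1 - β * z)⁻¹) • S) =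
        (1 - β * z) • Ring.inverse (1 - z • (β • 1 + S)) := by
  have hshift : 1 - (z * (1 - β * z)⁻¹) • S = (1 - β * z)⁻¹ • (1 - z • (β • 1 + S)) := by
    have hscalar : (1 - β * z)⁻¹ - (1 - β * z)⁻¹ * (z * β) = 1 := by
      field_simp
    calc 1 - (z * (1 - β * z)⁻¹) • S
        = ((1 - β * z)⁻¹ - (1 - β * z)⁻¹ * (z * β)) • (1 : A) - (z * (1 - β * z)⁻¹) • S := by
          rw [hscalar, one_smul]
      _ = (1 - β * z)⁻¹ • (1 - z • (β • 1 + S)) := by module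
  obtain ⟨hunit, hinv⟩ := isUnit_smul_and_inverse_smul (inv_ne_zero hd) h
  rw [hshift, hinv, inv_inv]
  exact ⟨hunit, rfl⟩

theorem IsIdempotentElem.isUnit_one_sub_smul_mul_of_shift {P T : A}
    (hP : IsIdempotentElem P) {β z : 𝕜} (hd : 1 - β * z ≠ 0)
    (h : IsUnit (1 - z • (β • 1 + P * T * P))) :
    IsUnit (1 - (z * (1 - β * z)⁻¹) • (P * T)) ∧
      Ring.inverse (1 - (z * (1 - β * z)⁻¹) • (P * T)) * P =
        (1 - β * z) • (P * Ring.inverse (1 - z • (β • 1 + P * T * P))) := by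
  set μ := z * (1 - β * z)⁻¹
  obtain ⟨hu, hinv⟩ := isUnit_one_sub_smul_of_shift (S := P * T * P) hd h
  have hPT : P * (μ • T) = μ • (P * T) := mul_smul_comm μ P T
  have hPTP : P * (μ • T) * P = μ • (P * T * P) := by rw [hPT, smul_mul_assoc]
  obtain ⟨hu', hinv'⟩ := hP.isUnit_one_sub_mul (S := μ • T) (hPTP ▸ hu)
  rw [hPT] at hu'
  rw [hPTP, hPT, hinv, mul_smul_comm] at hinv'
  exact ⟨hu', hinv'⟩

end Algebra

section NormedAlgebra

variable {𝕜 A : Type*} [NontriviallyNormedField 𝕜] [NormedRing A] [NormedAlgebra 𝕜 A]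
  {ι : Type*} {l : Filter ι}

theorem norm_inverse_one_sub_smul_le {S : A} {z : 𝕜} (h : IsUnit (1 - z • S)) :
    ‖Ring.inverse (1 - z • S)‖ ≤ ‖(1 : A)‖ + ‖z‖ * ‖S * Ring.inverse (1 - z • S)‖ := by
  conv_lhs => rw [inverse_one_sub_smul_eq h]
  exact (norm_add_le _ _).trans_eq (by rw [norm_smul])

theorem tendsto_inverse_one_sub_smul_sub {S : ι → A} {z₀ : 𝕜} {B C : ℝ}
    (hB : ∀ᶠ i in l, ‖S i‖ ≤ B)
    (h : ∀ᶠ p in l ×ˢ 𝓝 z₀, IsUnit (1 - p.2 • S p.1) ∧ ‖Ring.inverse (1 - p.2 • S p.1)‖ ≤ C) :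
    Tendsto (fun p : ι × 𝕜 => Ring.inverse (1 - p.2 • S p.1) - Ring.inverse (1 - z₀ • S p.1))
      (l ×ˢ 𝓝 z₀) (𝓝 0) := by
  have h₀ : ∀ᶠ i in l, IsUnit (1 - z₀ • S i) ∧ ‖Ring.inverse (1 - z₀ • S i)‖ ≤ C :=
    h.curry.mono fun _ hi => hi.self_of_nhds
  have hlim : Tendsto (fun p : ι × 𝕜 => ‖p.2 - z₀‖ * (C * B * C)) (l ×ˢ 𝓝 z₀) (𝓝 0) := by
    have hsnd : Tendsto Prod.snd (l ×ˢ 𝓝 z₀) (𝓝 z₀) := tendsto_snd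
    simpa using (hsnd.sub_const z₀).norm.mul_const (C * B * C)
  refine squeeze_zero_norm' ?_ hlim
  filter_upwards [h, tendsto_fst.eventually (hB.and h₀)] with ⟨i, z⟩ ⟨hz, hzC⟩ ⟨hSB, hz₀, hz₀C⟩
  rw [inverse_one_sub_smul_sub_inverse hz hz₀, norm_smul]
  gcongr
  have hC : 0 ≤ C := (norm_nonneg _).trans hzC
  have hB0 : 0 ≤ B := (norm_nonneg _).trans hSB
  exact norm_mul₃_le.trans (mul_le_mul (mul_le_mul hzC hSB (norm_nonneg _) hC) hz₀C
    (norm_nonneg _) (mul_nonneg hC hB0))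

variable [CompleteSpace A]

theorem norm_inverse_one_sub_le {w : A} (hw : ‖w‖ ≤ 1 / 2) :
    ‖Ring.inverse (1 - w)‖ ≤ ‖(1 : A)‖ + 1 := by
  have hw1 : ‖w‖ < 1 := hw.trans_lt (by norm_num)
  rw [← geom_series_eq_inverse w hw1]
  have hinv : (1 - ‖w‖)⁻¹ ≤ 2 := by
    rw [inv_le_comm₀ (by linarith) two_pos]
    linarith
  linarith [tsum_geometric_le_of_norm_lt_one w hw1]

theorem isUnit_one_sub_smul_of_norm_sub_mul_le {S : A} {z₀ z : 𝕜} (h₀ : IsUnit (1 - z₀ • S))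
    (hz : ‖z - z₀‖ * ‖S * Ring.inverse (1 - z₀ • S)‖ ≤ 1 / 2) :
    IsUnit (1 - z • S) ∧
      ‖Ring.inverse (1 - z • S)‖ ≤ (‖(1 : A)‖ + 1) * ‖Ring.inverse (1 - z₀ • S)‖ := by
  set w := (z - z₀) • (S * Ring.inverse (1 - z₀ • S))
  have hw : ‖w‖ ≤ 1 / 2 := by rwa [norm_smul]
  have hunit : IsUnit (1 - w) := isUnit_one_sub_of_norm_lt_one (hw.trans_lt (by norm_num))
  rw [one_sub_smul_eq_mul (z := z) h₀, Ring.inverse_mul (Or.inl h₀)]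
  exact ⟨h₀.mul hunit, (norm_mul_le _ _).trans
    (mul_le_mul_of_nonneg_right (norm_inverse_one_sub_le hw) (norm_nonneg _))⟩

theorem exists_eventually_isUnit_one_sub_smul_nhds {S : ι → A} {z₀ : 𝕜} {M : ℝ}
    (h : ∀ᶠ i in l, IsUnit (1 - z₀ • S i) ∧ ‖S i * Ring.inverse (1 - z₀ • S i)‖ ≤ M) :
    ∃ C, ∀ᶠ p in l ×ˢ 𝓝 z₀,
      IsUnit (1 - p.2 • S p.1) ∧ ‖Ring.inverse (1 - p.2 • S p.1)‖ ≤ C := by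
  have hδ : (0 : ℝ) < (2 * (|M| + 1))⁻¹ := by positivity
  refine ⟨(‖(1 : A)‖ + 1) * (‖(1 : A)‖ + ‖z₀‖ * M), ?_⟩
  filter_upwards [h.prod_mk (Metric.ball_mem_nhds z₀ hδ)] with ⟨i, z⟩ ⟨⟨hu, hM⟩, hz⟩
  have hz' : ‖z - z₀‖ * ‖S i * Ring.inverse (1 - z₀ • S i)‖ ≤ 1 / 2 := by
    rw [dist_eq_norm] at hz
    calc ‖z - z₀‖ * ‖S i * Ring.inverse (1 - z₀ • S i)‖
        ≤ (2 * (|M| + 1))⁻¹ * (|M| + 1) := by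
          gcongr
          exact hM.trans ((le_abs_self M).trans (le_add_of_nonneg_right zero_le_one))
      _ = 1 / 2 := by field_simp
  obtain ⟨hzu, hzb⟩ := isUnit_one_sub_smul_of_norm_sub_mul_le hu hz'
  refine ⟨hzu, hzb.trans (mul_le_mul_of_nonneg_left ?_ (by positivity))⟩
  exact (norm_inverse_one_sub_smul_le hu).trans (by gcongr)

end NormedAlgebra

section Operator

variable {𝕜 E F ι : Type*} [NontriviallyNormedField 𝕜] [NormedAddCommGroup E] [NormedSpace 𝕜 E]
  [NormedAddCommGroup F] [NormedSpace 𝕜 F] {l : Filter ι}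

theorem tendsto_apply_of_tendsto {S : ι → E →L[𝕜] F} {T : E →L[𝕜] F} {x : ι → E} {y : E}
    {B : ℝ} (hB : ∀ᶠ i in l, ‖S i‖ ≤ B) (hS : Tendsto (fun i => S i y) l (𝓝 (T y)))
    (hx : Tendsto x l (𝓝 y)) : Tendsto (fun i => S i (x i)) l (𝓝 (T y)) := by
  have hsmall : Tendsto (fun i => S i (x i - y)) l (𝓝 0) := by
    refine squeeze_zero_norm' (hB.mono fun i hi => ?_)
      (by simpa using (tendsto_iff_norm_sub_tendsto_zero.1 hx).const_mul B)
    exact (le_opNorm _ _).trans (mul_le_mul_of_nonneg_right hi (norm_nonneg _))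
  simpa using hsmall.add hS

/-- The uniform bound makes `1 - z • T` bounded below, and the strong limits of the
resolvents provide preimages, so `1 - z • T` is bijective. -/
theorem isUnit_one_sub_smul_of_tendsto [CompleteSpace E] [l.NeBot] {S : ι → E →L[𝕜] E}
    {T : E →L[𝕜] E} {z : 𝕜} {B M : ℝ} (hS : ∀ f, Tendsto (fun i => S i f) l (𝓝 (T f)))
    (hB : ∀ᶠ i in l, ‖S i‖ ≤ B)
    (hR : ∀ᶠ i in l, IsUnit (1 - z • S i) ∧ ‖Ring.inverse (1 - z • S i)‖ ≤ M)
    (hconv : ∀ f, ∃ ρ, Tendsto (fun i => Ring.inverse (1 - z • S i) f) l (𝓝 ρ)) :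
    IsUnit (1 - z • T) ∧
      ∀ f, Tendsto (fun i => Ring.inverse (1 - z • S i) f) l (𝓝 (Ring.inverse (1 - z • T) f)) := by
  have hsolve : ∀ f ρ, Tendsto (fun i => Ring.inverse (1 - z • S i) f) l (𝓝 ρ) →
      (1 - z • T) ρ = f := by
    intro f ρ hρ
    have hlim : Tendsto (fun i => (1 - z • S i) (Ring.inverse (1 - z • S i) f)) l
        (𝓝 ((1 - z • T) ρ)) := by
      simpa using hρ.sub ((tendsto_apply_of_tendsto hB (hS ρ) hρ).const_smul z)
    refine tendsto_nhds_unique hlim (tendsto_const_nhds.congr' ?_)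
    filter_upwards [hR] with i hi
    rw [← mul_apply_eq_comp, Ring.mul_inverse_cancel _ hi.1, one_apply_eq_self]
  have hlower : ∀ f, ‖f‖ ≤ M * ‖(1 - z • T) f‖ := by
    intro f
    have hlim : Tendsto (fun i => M * ‖(1 - z • S i) f‖) l (𝓝 (M * ‖(1 - z • T) f‖)) := by
      simpa using ((tendsto_const_nhds.sub ((hS f).const_smul z)).norm.const_mul M)
    refine ge_of_tendsto hlim (hR.mono fun i ⟨hu, hM⟩ => ?_)
    calc ‖f‖ = ‖Ring.inverse (1 - z • S i) ((1 - z • S i) f)‖ := by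
          rw [← mul_apply_eq_comp, Ring.inverse_mul_cancel _ hu, one_apply_eq_self]
      _ ≤ M * ‖(1 - z • S i) f‖ :=
          (le_opNorm _ _).trans (mul_le_mul_of_nonneg_right hM (norm_nonneg _))
  have hunit : IsUnit (1 - z • T) := by
    refine isUnit_iff_bijective.2 ⟨(injective_iff_map_eq_zero _).2 fun f hf => ?_, fun f => ?_⟩
    · simpa [hf] using hlower f
    · obtain ⟨ρ, hρ⟩ := hconv f
      exact ⟨ρ, hsolve f ρ hρ⟩
  refine ⟨hunit, fun f => ?_⟩
  obtain ⟨ρ, hρ⟩ := hconv f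
  convert hρ
  rw [← hsolve f ρ hρ, ← mul_apply_eq_comp, Ring.inverse_mul_cancel _ hunit,
    one_apply_eq_self]

theorem tendsto_smul_one_add_mul_mul_apply {b : ι → 𝕜} {P : ι → E →L[𝕜] E} {T : E →L[𝕜] E}
    (hb : Tendsto b l (𝓝 0)) (hP : ∀ i, ‖P i‖ ≤ 1) (hPf : ∀ f, Tendsto (fun i => P i f) l (𝓝 f))
    (f : E) : Tendsto (fun i => (b i • 1 + P i * T * P i) f) l (𝓝 (T f)) := by
  have hTP : Tendsto (fun i => P i (T (P i f))) l (𝓝 ((1 : E →L[𝕜] E) (T f))) :=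
    tendsto_apply_of_tendsto (Eventually.of_forall hP) (by simpa using hPf (T f))
      ((T.continuous.tendsto f).comp (hPf f))
  simpa using (hb.smul_const f).add hTP

theorem eventually_norm_smul_one_add_mul_mul_le {b : ι → 𝕜} {P : ι → E →L[𝕜] E}
    {T : E →L[𝕜] E} (hb : Tendsto b l (𝓝 0)) (hP : ∀ i, ‖P i‖ ≤ 1) :
    ∀ᶠ i in l, ‖b i • 1 + P i * T * P i‖ ≤ 1 + ‖T‖ := by
  filter_upwards [(tendsto_norm_zero.comp hb).eventually_le_const one_pos] with i hi
  have hone : ‖(1 : E →L[𝕜] E)‖ ≤ 1 := by rw [one_def]; exact norm_id_le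
  calc ‖b i • 1 + P i * T * P i‖ ≤ ‖b i‖ * ‖(1 : E →L[𝕜] E)‖ + ‖P i‖ * ‖T‖ * ‖P i‖ :=
        (norm_add_le _ _).trans (by rw [norm_smul]; gcongr; exact norm_mul₃_le)
    _ ≤ 1 * 1 + 1 * ‖T‖ * 1 := by gcongr; exacts [hi, hP i, hP i]
    _ = 1 + ‖T‖ := by ring

end Operator

section Truncation

theorem norm_chi_le (τ x : ℝ) : ‖chi τ x‖ ≤ 1 := by
  by_cases hx : x ∈ Set.Ioo (-τ) τ <;> simp [chi, hx]

theorem chi_mul_self (τ x : ℝ) : chi τ x * chi τ x = chi τ x := by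
  by_cases hx : x ∈ Set.Ioo (-τ) τ <;> simp [chi, hx]

theorem norm_apply_le_of_chi {Q : L2op} {τ : ℝ}
    (hQ : ∀ f : L2, (Q f : ℝ → ℂ) =ᵐ[volume] fun x => chi τ x * (f : ℝ → ℂ) x) (f : L2) :
    ‖Q f‖ ≤ ‖f‖ := by
  refine Lp.norm_le_norm_of_ae_le ((hQ f).mono fun x hx => ?_)
  rw [hx, norm_mul]
  exact mul_le_of_le_one_left (norm_nonneg _) (norm_chi_le τ x)

theorem opNorm_le_one_of_chi {Q : L2op} {τ : ℝ}
    (hQ : ∀ f : L2, (Q f : ℝ → ℂ) =ᵐ[volume] fun x => chi τ x * (f : ℝ → ℂ) x) : ‖Q‖ ≤ 1 :=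
  Q.opNorm_le_bound zero_le_one fun f => (one_mul ‖f‖).symm ▸ norm_apply_le_of_chi hQ f

theorem isIdempotentElem_of_chi {Q : L2op} {τ : ℝ}
    (hQ : ∀ f : L2, (Q f : ℝ → ℂ) =ᵐ[volume] fun x => chi τ x * (f : ℝ → ℂ) x) :
    IsIdempotentElem Q := by
  refine ContinuousLinearMap.ext fun f => Lp.ext ?_
  filter_upwards [hQ (Q f), hQ f] with x hQQ hQ
  rw [mul_apply_eq_comp, hQQ, hQ, ← mul_assoc, chi_mul_self]

theorem chi_mul_eq_self_of_tsupport_subset {g : ℝ → ℂ} {r τ : ℝ}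
    (hg : tsupport g ⊆ Metric.ball 0 r) (hr : r ≤ τ) (x : ℝ) : chi τ x * g x = g x := by
  by_cases hx : x ∈ Set.Ioo (-τ) τ
  · simp [chi, hx]
  · have hxr : x ∉ tsupport g := fun h => hx <| by
      have := hg h
      rw [Real.ball_eq_Ioo, zero_sub, zero_add] at this
      exact ⟨by linarith [this.1], by linarith [this.2]⟩
    simp [image_eq_zero_of_notMem_tsupport hxr]

/-- Each truncation eventually fixes a compactly supported function, and these are dense
in `L²`. -/
theorem tendsto_apply_of_chi {τ : ℕ → ℝ} {P : ℕ → L2op} (hτ : Tendsto τ atTop atTop)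
    (hP : ∀ n, ∀ f : L2, (P n f : ℝ → ℂ) =ᵐ[volume] fun x => chi (τ n) x * (f : ℝ → ℂ) x)
    (f : L2) : Tendsto (fun n => P n f) atTop (𝓝 f) := by
  rw [Metric.tendsto_atTop]
  intro ε hε
  obtain ⟨g, hgc, hfg, -, hg⟩ := (Lp.memLp f).exists_hasCompactSupport_eLpNorm_sub_le
    (by norm_num) (ENNReal.ofReal_pos.2 (div_pos hε three_pos)).ne'
  set g' : L2 := hg.toLp g
  have hdist : dist f g' ≤ ε / 3 := by
    have hae : (f - g' : ℝ → ℂ) =ᵐ[volume] (f - g : ℝ → ℂ) :=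
      hg.coeFn_toLp.mono fun x hx => congrArg (f x - ·) hx
    rw [Lp.dist_def, eLpNorm_congr_ae hae]
    exact ENNReal.toReal_le_of_le_ofReal (by positivity) hfg
  obtain ⟨r, hr⟩ := hgc.isBounded.subset_ball (0 : ℝ)
  obtain ⟨N, hN⟩ := (hτ.eventually_ge_atTop r).exists_forall_of_atTop
  refine ⟨N, fun n hn => ?_⟩
  have hfix : P n g' = g' := by
    refine Lp.ext ?_
    filter_upwards [hP n g', hg.coeFn_toLp] with x hPx hgx
    rw [hPx, hgx, chi_mul_eq_self_of_tsupport_subset hr (hN n hn)]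
  calc dist (P n f) f ≤ dist (P n f) (P n g') + dist (P n g') f := dist_triangle _ _ _
    _ = ‖P n (f - g')‖ + dist f g' := by rw [dist_eq_norm (P n f), ← map_sub, hfix, dist_comm]
    _ ≤ dist f g' + dist f g' := by
        rw [dist_eq_norm f]
        gcongr
        exact norm_apply_le_of_chi (hP n) _
    _ < ε := by linarith

end Truncation

section Regions

theorem exists_eventually_isUnit_of_mem_nablaB {S : ℕ → L2op} {z : ℂ} (hz : z ∈ nablaB S) :
    ∃ C, ∀ᶠ p in atTop ×ˢ 𝓝 z, IsUnit (1 - p.2 • S p.1) ∧ ‖res (S p.1) p.2‖ ≤ C := by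
  obtain ⟨-, M, -, N, hN⟩ := hz
  exact exists_eventually_isUnit_one_sub_smul_nhds (M := M)
    ((eventually_gt_atTop N).mono fun n hn => hN n hn)

theorem tendsto_res_of_mem_nablaS {S : ℕ → L2op} {T : L2op} {z : ℂ} {B : ℝ}
    (hz : z ∈ nablaS S) (hS : ∀ f, Tendsto (fun n => S n f) atTop (𝓝 (T f)))
    (hB : ∀ᶠ n in atTop, ‖S n‖ ≤ B) :
    z ∈ regularSet T ∧
      ∀ f, Tendsto (fun p : ℕ × ℂ => res (S p.1) p.2 f) (atTop ×ˢ 𝓝 z) (𝓝 (res T z f)) := by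
  obtain ⟨C, hC⟩ := exists_eventually_isUnit_of_mem_nablaB hz.1
  have h₀ : ∀ᶠ n in atTop, IsUnit (1 - z • S n) ∧ ‖res (S n) z‖ ≤ C :=
    hC.curry.mono fun _ h => h.self_of_nhds
  have hconv : ∀ f, ∃ ρ, Tendsto (fun n => res (S n) z f) atTop (𝓝 ρ) := by
    intro f
    obtain ⟨g, hg⟩ := hz.2 f
    refine ⟨f + z • g, (tendsto_const_nhds.add (hg.const_smul z)).congr' ?_⟩
    filter_upwards [h₀] with n hn
    rw [res, inverse_one_sub_smul_eq hn.1]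
    rfl
  obtain ⟨hT, hlim⟩ := isUnit_one_sub_smul_of_tendsto hS hB h₀ hconv
  refine ⟨hT, fun f => ?_⟩
  have hsub := ((ContinuousLinearMap.apply ℂ L2 f).continuous.tendsto 0).comp
    (tendsto_inverse_one_sub_smul_sub hB hC)
  simpa [res] using hsub.add ((hlim f).comp tendsto_fst)

theorem tendsto_res_lamn_apply_sub {T : L2op} {P : ℕ → L2op} {b : ℕ → ℂ}
    (hP : ∀ n, IsIdempotentElem (P n)) (hPn : ∀ n, ‖P n‖ ≤ 1)
    (hPf : ∀ f, Tendsto (fun n => P n f) atTop (𝓝 f)) (hb : Tendsto b atTop (𝓝 0)) {z : ℂ}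
    (hz : z ∈ nablaS fun n => b n • (1 : L2op) + P n * T * P n) (g : L2) :
    (∀ᶠ p in atTop ×ˢ 𝓝 z, lamn b p.2 p.1 ∈ regularSet (P p.1 * T)) ∧
      Tendsto (fun p : ℕ × ℂ => res (P p.1 * T) (lamn b p.2 p.1) (P p.1 g) - res T p.2 g)
        (atTop ×ˢ 𝓝 z) (𝓝 0) := by
  set S := fun n => b n • (1 : L2op) + P n * T * P n
  obtain ⟨C, hC⟩ := exists_eventually_isUnit_of_mem_nablaB hz.1
  obtain ⟨hT, hR⟩ := tendsto_res_of_mem_nablaS hz (tendsto_smul_one_add_mul_mul_apply hb hPn hPf)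
    (eventually_norm_smul_one_add_mul_mul_le hb hPn)
  have hd : Tendsto (fun p : ℕ × ℂ => 1 - b p.1 * p.2) (atTop ×ˢ 𝓝 z) (𝓝 1) := by
    simpa using ((hb.comp tendsto_fst).mul tendsto_snd).const_sub (1 : ℂ)
  have hshift : ∀ᶠ p in atTop ×ˢ 𝓝 z, lamn b p.2 p.1 ∈ regularSet (P p.1 * T) ∧
      res (P p.1 * T) (lamn b p.2 p.1) (P p.1 g) =
        (1 - b p.1 * p.2) • P p.1 (res (S p.1) p.2 g) := by
    filter_upwards [hC, hd.eventually_ne one_ne_zero] with ⟨n, w⟩ ⟨hu, _⟩ hdn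
    obtain ⟨hu', hinv⟩ := (hP n).isUnit_one_sub_smul_mul_of_shift hdn hu
    have happ := congrArg (fun A : L2op => A g) hinv
    simp only [mul_apply_eq_comp, smul_apply] at happ
    exact ⟨hu', happ⟩
  have hPR : Tendsto (fun p : ℕ × ℂ => P p.1 (res (S p.1) p.2 g)) (atTop ×ˢ 𝓝 z)
      (𝓝 ((1 : L2op) (res T z g))) :=
    tendsto_apply_of_tendsto (Eventually.of_forall fun p => hPn p.1)
      ((hPf _).comp tendsto_fst) (hR g)
  have hRT : Tendsto (fun p : ℕ × ℂ => res T p.2 g) (atTop ×ˢ 𝓝 z) (𝓝 (res T z g)) := by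
    have hcont : ContinuousAt (fun w : ℂ => res T w) z :=
      (NormedRing.inverse_continuousAt hT.unit).comp (f := fun w : ℂ => 1 - w • T)
        (by fun_prop)
    exact ((ContinuousLinearMap.apply ℂ L2 g).continuous.tendsto _).comp
      (hcont.tendsto.comp tendsto_snd)
  refine ⟨hshift.mono fun _ h => h.1, ?_⟩
  have hlim := (hd.smul hPR).sub hRT
  rw [one_apply_eq_self, one_smul, sub_self] at hlim
  exact hlim.congr' (hshift.mono fun p h => (congrArg (· - res T p.2 g) h.2).symm)

end Regions

theorem statement4_general (T : L2op) (K : ℝ → ℝ → ℂ) (kt' : ℝ → L2)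
    (tau : ℕ → ℝ) (P : ℕ → L2op) (hiv : ConditionIV K T tau P)
    (b : ℕ → ℂ) (hb : Tendsto b atTop (𝓝 (0 : ℂ)))
    (Kc : Set ℂ) (hKc : IsCompact Kc) (hKcsub : Kc ⊆ nablaS (fun n => b n • (1 : L2op) + P n * T * P n)) (t : ℝ) :
    (∀ᶠ n in atTop, ∀ lam ∈ Kc, lamn b lam n ∈ regularSet (P n * T)) ∧
    Tendsto (fun n => ⨆ lam ∈ Kc,
        ‖res (P n * T) (lamn b lam n) (P n (kt' t)) - res T lam (kt' t)‖)
      atTop (𝓝 (0 : ℝ)) := by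
  have hlocal := fun z (hz : z ∈ Kc) =>
    tendsto_res_lamn_apply_sub (fun n => isIdempotentElem_of_chi (hiv.proj n))
      (fun n => opNorm_le_one_of_chi (hiv.proj n)) (tendsto_apply_of_chi hiv.tendsto_top hiv.proj)
      hb (hKcsub hz) (kt' t)
  refine ⟨hKc.eventually_forall_of_forall_eventually_prod fun z hz => (hlocal z hz).1, ?_⟩
  refine tendsto_biSup_of_forall_eventually_le (fun _ _ _ => norm_nonneg _) fun ε hε => ?_
  exact hKc.eventually_forall_of_forall_eventually_prod fun z hz =>
    (hlocal z hz).2.norm.eventually_le_const (by rwa [norm_zero])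

theorem statement4 (T : L2op) (K : ℝ → ℝ → ℂ) (kt kt' : ℝ → L2)
    (hK : IsK0Kernel K kt kt') (hT : IsInducedBy T K)
    (tau : ℕ → ℝ) (P : ℕ → L2op) (hiv : ConditionIV K T tau P)
    (b : ℕ → ℂ) (hb : Tendsto b atTop (𝓝 (0 : ℂ)))
    (Kc : Set ℂ) (hKc : IsCompact Kc) (hKcsub : Kc ⊆ nablaS (fun n => b n • (1 : L2op) + P n * T * P n)) (t : ℝ) :
    (∀ᶠ n in atTop, ∀ lam ∈ Kc, lamn b lam n ∈ regularSet (P n * T)) ∧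
    Tendsto (fun n => ⨆ lam ∈ Kc,
        ‖res (P n * T) (lamn b lam n) (P n (kt' t)) - res T lam (kt' t)‖)
      atTop (𝓝 (0 : ℝ)) :=
  statement4_general T K kt' tau P hiv b hb Kc hKc hKcsub t
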